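/- Let A and B be finite alphabets, let x ∈ A^ℤ and y ∈ B^ℤ be eventually periodic sequences with least periods N and M respectively, and let X and Y be the subshifts they generate. Then X and Y are conjugate if and only if M = N and a(x) ≡ a(y) (mod N). -/

import Mathlib

open Classical

/-- The shift map `σ` on bi-infinite sequences: `σ(x)_i = x_{i+1}`. -/
def shiftMap {A : Type*} (x : ℤ → A) : ℤ → A := fun i => x (i + 1)

/-- The iterated shift `σ^k` for `k ∈ ℤ`: `σ^k(x)_i = x_{i+k}`. -/
def shiftZ {A : Type*} (k : ℤ) (x : ℤ → A) : ℤ → A := fun i => x (i + k)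

/-- `x` is periodic with period `N > 0`, i.e. `σ^N(x) = x`. -/
def IsPeriodicWith {A : Type*} (x : ℤ → A) (N : ℕ) : Prop :=
  0 < N ∧ ∀ i : ℤ, x (i + N) = x i

/-- `x` is periodic (with some period `N > 0`). -/
def IsPeriodicSeq {A : Type*} (x : ℤ → A) : Prop := ∃ N : ℕ, IsPeriodicWith x N

/-- The sequence `p(x;i,n)` obtained from `x` by removing the block `x_{i+1} ⋯ x_{i+n}`. -/
def removeBlock {A : Type*} (x : ℤ → A) (i : ℤ) (n : ℕ) : ℤ → A :=
  fun k => if k ≤ i then x k else x (k + n)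

/-- `(i,n)` is an anomaly occurrence of `x`: `n > 0` and `p(x;i,n)` is periodic. -/
def IsAnomalyOcc {A : Type*} (x : ℤ → A) (i : ℤ) (n : ℕ) : Prop :=
  0 < n ∧ IsPeriodicSeq (removeBlock x i n)

/-- `x` is eventually periodic: non-periodic, but removing some block leaves a periodic sequence. -/
def EventuallyPeriodic {A : Type*} (x : ℤ → A) : Prop :=
  ¬ IsPeriodicSeq x ∧ ∃ (i : ℤ) (n : ℕ), IsAnomalyOcc x i n

/-- The least period of an eventually periodic sequence `x`: the least period of
`p(x;i,n)` over anomaly occurrences `(i,n)` of `x`. -/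
noncomputable def evLeastPeriod {A : Type*} (x : ℤ → A) : ℕ :=
  sInf {N : ℕ | ∃ (i : ℤ) (n : ℕ), IsAnomalyOcc x i n ∧ IsPeriodicWith (removeBlock x i n) N}

/-- The anomaly size `a(x)`: the minimum of `n` over anomaly occurrences `(i,n)` of `x`. -/
noncomputable def anomalySize {A : Type*} (x : ℤ → A) : ℕ :=
  sInf {n : ℕ | ∃ i : ℤ, IsAnomalyOcc x i n}

/-- The orbit `{σ^k(x) : k ∈ ℤ}` of a bi-infinite sequence. -/
def seqOrbit {A : Type*} (x : ℤ → A) : Set (ℤ → A) := {y | ∃ k : ℤ, y = shiftZ k x}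

/-- The subshift generated by `x`: the closure of its orbit in the product topology. -/
def subshiftGen {A : Type*} [TopologicalSpace A] (x : ℤ → A) : Set (ℤ → A) :=
  closure (seqOrbit x)

/-- Two subshifts are conjugate if there is a homeomorphism between them commuting
with the shift. -/
def Conjugate {A B : Type*} [TopologicalSpace A] [TopologicalSpace B]
    (X : Set (ℤ → A)) (Y : Set (ℤ → B)) : Prop :=
  ∃ φ : X ≃ₜ Y, ∀ (u : ℤ → A) (hu : u ∈ X) (hu' : shiftMap u ∈ X),
    ((φ ⟨shiftMap u, hu'⟩ : Y) : ℤ → B) = shiftMap ((φ ⟨u, hu⟩ : Y) : ℤ → B)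

/-- The relation generating the suspension: `(x,s) ∼ (σ^n(x), s - n)`. -/
def SuspRel {A : Type*} (X : Set (ℤ → A)) : (X × ℝ) → (X × ℝ) → Prop :=
  fun p q => ∃ n : ℤ, (q.1 : ℤ → A) = shiftZ n (p.1 : ℤ → A) ∧ q.2 = p.2 - n

/-- The suspension `ΣX` of a subshift `X`. -/
def Susp {A : Type*} [TopologicalSpace A] (X : Set (ℤ → A)) : Type _ :=
  Quot (SuspRel X)

instance {A : Type*} [TopologicalSpace A] (X : Set (ℤ → A)) : TopologicalSpace (Susp X) :=
  instTopologicalSpaceQuot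

/-- The suspension flow `φ_t [x,s] = [x, s+t]`. -/
def suspFlow {A : Type*} [TopologicalSpace A] (X : Set (ℤ → A)) (t : ℝ) :
    Susp X → Susp X :=
  Quot.lift (fun p => Quot.mk _ (p.1, p.2 + t)) (by
    rintro p r ⟨n, h1, h2⟩
    exact Quot.sound ⟨n, h1, by rw [h2]; ring⟩)

/-- Two subshifts are flow equivalent if there is a homeomorphism of their suspensions
taking flow lines to flow lines in an orientation-preserving way. -/
def FlowEquiv {A B : Type*} [TopologicalSpace A] [TopologicalSpace B]
    (X : Set (ℤ → A)) (Y : Set (ℤ → B)) : Prop :=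
  ∃ h : Susp X ≃ₜ Susp Y, ∀ u : Susp X, ∃ τ : ℝ → ℝ,
    StrictMono τ ∧ Function.Bijective τ ∧ τ 0 = 0 ∧
      ∀ t : ℝ, h (suspFlow X t u) = suspFlow Y (τ t) (h u)

/-- Cell lengths `z_n` for the type-`S` skew Sturmian sequence `S(0, q/p)`, with `β = p/q`. -/
noncomputable def cellLenS (p q : ℤ) (n : ℤ) : ℕ :=
  if n < 0 then
    ({k : ℤ | (n : ℚ) < (k : ℚ) * ((p : ℚ) / (q : ℚ)) ∧
        (k : ℚ) * ((p : ℚ) / (q : ℚ)) ≤ (n : ℚ) + 1}).ncard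
  else if n = 0 then
    ({k : ℤ | 0 < (k : ℚ) * ((p : ℚ) / (q : ℚ)) ∧
        (k : ℚ) * ((p : ℚ) / (q : ℚ)) < 1}).ncard
  else
    ({k : ℤ | (n : ℚ) ≤ (k : ℚ) * ((p : ℚ) / (q : ℚ)) ∧
        (k : ℚ) * ((p : ℚ) / (q : ℚ)) < (n : ℚ) + 1}).ncard

/-- Cell lengths `z′_n` for the type-`S′` skew Sturmian sequence `S′(0, q/p)`, with `β = p/q`. -/
noncomputable def cellLenS' (p q : ℤ) (n : ℤ) : ℕ :=
  if n < 0 then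
    ({k : ℤ | (n : ℚ) ≤ (k : ℚ) * ((p : ℚ) / (q : ℚ)) ∧
        (k : ℚ) * ((p : ℚ) / (q : ℚ)) < (n : ℚ) + 1}).ncard
  else if n = 0 then
    ({k : ℤ | 0 ≤ (k : ℚ) * ((p : ℚ) / (q : ℚ)) ∧
        (k : ℚ) * ((p : ℚ) / (q : ℚ)) ≤ 1}).ncard
  else
    ({k : ℤ | (n : ℚ) < (k : ℚ) * ((p : ℚ) / (q : ℚ)) ∧
        (k : ℚ) * ((p : ℚ) / (q : ℚ)) ≤ (n : ℚ) + 1}).ncard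

/-- The position `L_n` of the leading `1` of the cell `B_n`. -/
noncomputable def cellStart (z : ℤ → ℕ) (n : ℤ) : ℤ :=
  if 0 ≤ n then n + ∑ j ∈ Finset.Ico (0 : ℤ) n, (z j : ℤ)
  else n - ∑ j ∈ Finset.Ico n (0 : ℤ), (z j : ℤ)

/-- The `{0,1}`-sequence determined by cell lengths `z`: a `1` at each position `L_n`
and `0` elsewhere. -/
noncomputable def seqOfCells (z : ℤ → ℕ) : ℤ → Fin 2 :=
  fun i => if ∃ n : ℤ, i = cellStart z n then 1 else 0

/-- The type-`S` skew Sturmian sequence `S(0, q/p)`. -/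
noncomputable def sturmS (p q : ℤ) : ℤ → Fin 2 := seqOfCells (cellLenS p q)

/-- The type-`S′` skew Sturmian sequence `S′(0, q/p)`. -/
noncomputable def sturmS' (p q : ℤ) : ℤ → Fin 2 := seqOfCells (cellLenS' p q)


/-!
The subshift `X` generated by `x` is the orbit `σ^k x` (`k ∈ ℤ`) together with the `N` shifts
of the periodic sequence `P = p(x;i,n)`: as `k → -∞` along a residue class mod `N`, `σ^k x`
tends to `σ^k P`, and as `k → +∞` it tends to `σ^(k-n) P`. Hence `k ↦ σ^k x`, `r ↦ σ^r P`
is a continuous bijection onto `X` from the compact space of pairs `(k mod N, k)` for `k ≤ 0`,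
`((k - n) mod N, k)` for `k > 0`, and `(r, ∞)`, inside `ZMod N × OnePoint ℤ`. That space depends
only on `N` and `n mod N`, which gives the conjugacy. Conversely, a conjugacy preserves the
stabiliser of every point under the shift, so it maps `P` to a periodic point of `Y` (whence
`M = N`) and `x` to some `σ^c y`; pushing the limits of `σ^(∓mN) x` through it gives
`σ^(c - a(x)) Q = σ^(c - a(y)) Q`, i.e. `a(x) ≡ a(y) (mod N)`.
-/

open Filter Topology Function OnePoint Set

section Shift

variable {A : Type*}

@[simp]
theorem shiftZ_apply (k : ℤ) (x : ℤ → A) (j : ℤ) : shiftZ k x j = x (j + k) := rfl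

theorem shiftMap_eq_shiftZ_one (x : ℤ → A) : shiftMap x = shiftZ 1 x := rfl

@[simp]
theorem shiftZ_zero (x : ℤ → A) : shiftZ 0 x = x := by
  funext j; simp

theorem shiftZ_shiftZ (a b : ℤ) (x : ℤ → A) : shiftZ a (shiftZ b x) = shiftZ (a + b) x := by
  funext j; simp [add_assoc]

theorem shiftZ_eq_self_iff {x : ℤ → A} {t : ℤ} : shiftZ t x = x ↔ Periodic x t :=
  funext_iff

theorem periodic_shiftZ_iff {x : ℤ → A} {a t : ℤ} :
    Periodic (shiftZ a x) t ↔ Periodic x t :=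
  ⟨fun h => by simpa using h.add_const (-a), fun h => h.add_const a⟩

theorem shiftZ_eq_shiftZ_iff {x : ℤ → A} {a b : ℤ} :
    shiftZ a x = shiftZ b x ↔ Periodic x (a - b) := by
  rw [← periodic_shiftZ_iff (a := b), ← shiftZ_eq_self_iff, shiftZ_shiftZ, sub_add_cancel]

theorem Function.Periodic.apply_eq_of_intCast_eq {P : ℤ → A} {N : ℕ} (hP : Periodic P N)
    {a b : ℤ} (h : (a : ZMod N) = b) : P a = P b := by
  obtain ⟨t, ht⟩ := (ZMod.intCast_eq_intCast_iff_dvd_sub a b N).1 h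
  rw [show b = a + t * N by linarith]
  simpa using (hP.int_mul t a).symm

theorem Function.Periodic.eq_of_eqOn_Iic {p q : ℤ → A} {c a : ℤ} (hp : Periodic p c)
    (hq : Periodic q c) (hc : 0 < c) (h : ∀ k ≤ a, p k = q k) : p = q := by
  funext m
  have hm : m - |m - a| * c ≤ a := by nlinarith [le_abs_self (m - a), abs_nonneg (m - a)]
  have hpm := hp.sub_int_mul_eq (x := m) |m - a|
  have hqm := hq.sub_int_mul_eq (x := m) |m - a|
  simp only [Int.cast_id] at hpm hqm
  rw [← hpm, h _ hm, hqm]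

theorem natCast_dvd_of_isLeast_period {P : ℤ → A} {N : ℕ}
    (hN : IsLeast {M | IsPeriodicWith P M} N) {s : ℤ} (hs : Periodic P s) : (N : ℤ) ∣ s := by
  have hN0 : (0 : ℤ) < N := by exact_mod_cast hN.1.1
  have hr : Periodic P (s % N) := by
    rw [Int.emod_def, mul_comm]
    exact hs.sub_period ((show Periodic P N from hN.1.2).int_mul _)
  refine Int.dvd_of_emod_eq_zero (le_antisymm ?_ (Int.emod_nonneg _ hN0.ne'))
  by_contra! hpos
  have hle := hN.2 ⟨(by omega : 0 < (s % N).toNat),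
    by rwa [Int.toNat_of_nonneg hpos.le]⟩
  have := Int.emod_lt_of_pos s hN0
  omega

end Shift

section Decomposition

variable {A : Type*}

/-- `P = p(x;i,n)` for an anomaly occurrence `(i,n)` of `x`, and `N` is the least period of `P`. -/
structure IsAnomalyDecomp (x P : ℤ → A) (i : ℤ) (n N : ℕ) : Prop where
  not_periodic : ¬ IsPeriodicSeq x
  period_pos : 0 < N
  periodic : Periodic P N
  natCast_dvd_of_periodic : ∀ s : ℤ, Periodic P s → (N : ℤ) ∣ s
  eq_of_le : ∀ k ≤ i, x k = P k
  eq_of_lt : ∀ k, i + n < k → x k = P (k - n)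

theorem EventuallyPeriodic.exists_isAnomalyDecomp {x : ℤ → A} (hx : EventuallyPeriodic x) :
    ∃ P i, IsAnomalyDecomp x P i (anomalySize x) (evLeastPeriod x) := by
  obtain ⟨hnp, i₀, n₀, hocc₀⟩ := hx
  obtain ⟨i, ha, N₀, hN₀⟩ : ∃ i, IsAnomalyOcc x i (anomalySize x) :=
    Nat.sInf_mem (s := {n | ∃ i, IsAnomalyOcc x i n}) ⟨n₀, i₀, hocc₀⟩
  set P := removeBlock x i (anomalySize x)
  have hunique : ∀ i' n', IsAnomalyOcc x i' n' → removeBlock x i' n' = P := by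
    rintro i' n' ⟨-, M, hM⟩
    have hMN : (0 : ℤ) < N₀ * M := by have := hM.1; have := hN₀.1; positivity
    refine Periodic.eq_of_eqOn_Iic (a := min i i') (Periodic.nat_mul hM.2 N₀)
      (mul_comm (M : ℤ) N₀ ▸ Periodic.nat_mul hN₀.2 M) hMN fun k hk => ?_
    simp [P, removeBlock, hk.trans (min_le_left _ _), hk.trans (min_le_right _ _)]
  have hset : {N | ∃ i n, IsAnomalyOcc x i n ∧ IsPeriodicWith (removeBlock x i n) N} =
      {N | IsPeriodicWith P N} :=
    Set.ext fun N => ⟨fun ⟨i', n', ho, h⟩ => hunique i' n' ho ▸ h,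
      fun h => ⟨i, _, ⟨ha, N₀, hN₀⟩, h⟩⟩
  have hleast : IsLeast {N | IsPeriodicWith P N} (evLeastPeriod x) := by
    rw [evLeastPeriod, hset]
    exact ⟨Nat.sInf_mem ⟨N₀, hN₀⟩, fun _ => Nat.sInf_le⟩
  refine ⟨P, i, hnp, hleast.1.1, hleast.1.2, fun s => natCast_dvd_of_isLeast_period hleast,
    fun k hk => by simp [P, removeBlock, hk], fun k hk => ?_⟩
  simp [P, removeBlock, show ¬ k - anomalySize x ≤ i by omega]

namespace IsAnomalyDecomp

variable {x P : ℤ → A} {i : ℤ} {n N : ℕ}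

theorem neZero (hx : IsAnomalyDecomp x P i n N) : NeZero N := ⟨hx.period_pos.ne'⟩

theorem periodic_iff (hx : IsAnomalyDecomp x P i n N) {t : ℤ} :
    Periodic P t ↔ (N : ℤ) ∣ t :=
  ⟨hx.natCast_dvd_of_periodic t,
    fun ⟨c, hc⟩ => by simpa [hc, mul_comm] using hx.periodic.int_mul c⟩

theorem eq_zero_of_periodic (hx : IsAnomalyDecomp x P i n N) {s : ℤ} (hs : Periodic x s) :
    s = 0 := by
  by_contra h
  refine hx.not_periodic ⟨s.natAbs, Int.natAbs_pos.2 h, ?_⟩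
  rcases Int.natAbs_eq s with hs' | hs'
  · rw [← hs']; exact hs
  · rw [← neg_neg (s.natAbs : ℤ), ← hs']; exact hs.neg

theorem shiftZ_inj (hx : IsAnomalyDecomp x P i n N) {a b : ℤ} :
    shiftZ a x = shiftZ b x ↔ a = b := by
  rw [shiftZ_eq_shiftZ_iff]
  exact ⟨fun h => sub_eq_zero.1 (hx.eq_zero_of_periodic h), fun h => by simp [h]⟩

theorem shiftZ_periodicPart_inj (hx : IsAnomalyDecomp x P i n N) {a b : ℤ} :
    shiftZ a P = shiftZ b P ↔ (a : ZMod N) = b := by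
  rw [shiftZ_eq_shiftZ_iff, hx.periodic_iff, ZMod.intCast_eq_intCast_iff_dvd_sub, ← dvd_neg,
    neg_sub]

theorem shiftZ_ne_shiftZ_periodicPart (hx : IsAnomalyDecomp x P i n N) (a b : ℤ) :
    shiftZ a x ≠ shiftZ b P := by
  intro h
  have hper : Periodic (shiftZ a x) N := h ▸ periodic_shiftZ_iff.2 hx.periodic
  exact hx.period_pos.ne'
    (by exact_mod_cast hx.eq_zero_of_periodic (periodic_shiftZ_iff.1 hper))

theorem shiftZ_apply_of_le (hx : IsAnomalyDecomp x P i n N) {a b j : ℤ} (hj : j + a ≤ i)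
    (hab : (a : ZMod N) = b) : shiftZ a x j = shiftZ b P j := by
  simp only [shiftZ_apply, hx.eq_of_le _ hj]
  exact hx.periodic.apply_eq_of_intCast_eq (by push_cast; rw [hab])

theorem shiftZ_apply_of_lt (hx : IsAnomalyDecomp x P i n N) {a b j : ℤ} (hj : i + n < j + a)
    (hab : ((a - n : ℤ) : ZMod N) = b) : shiftZ a x j = shiftZ b P j := by
  simp only [shiftZ_apply, hx.eq_of_lt _ hj]
  exact hx.periodic.apply_eq_of_intCast_eq (by push_cast at hab ⊢; rw [← hab]; ring)

end IsAnomalyDecomp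

end Decomposition

section Subshift

variable {A : Type*} [TopologicalSpace A]

theorem continuous_shiftZ (t : ℤ) : Continuous (shiftZ t : (ℤ → A) → ℤ → A) :=
  continuous_pi fun _ => continuous_apply _

theorem shiftZ_mem_subshiftGen {x u : ℤ → A} (hu : u ∈ subshiftGen x) (t : ℤ) :
    shiftZ t u ∈ subshiftGen x :=
  map_mem_closure (continuous_shiftZ t) hu fun _ ⟨k, hk⟩ =>
    ⟨t + k, by rw [hk, shiftZ_shiftZ]⟩

theorem shiftMap_mem_subshiftGen {x u : ℤ → A} (hu : u ∈ subshiftGen x) :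
    shiftMap u ∈ subshiftGen x :=
  shiftZ_mem_subshiftGen hu 1

theorem shiftZ_mem_subshiftGen_self (x : ℤ → A) (k : ℤ) : shiftZ k x ∈ subshiftGen x :=
  subset_closure ⟨k, rfl⟩

namespace IsAnomalyDecomp

variable {x P : ℤ → A} {i : ℤ} {n N : ℕ}

theorem tendsto_shiftZ_neg_mul (hx : IsAnomalyDecomp x P i n N) (c : ℤ) :
    Tendsto (fun m : ℕ => shiftZ (-(m * N : ℤ)) (shiftZ c x)) atTop (𝓝 (shiftZ c P)) := by
  refine tendsto_pi_nhds.2 fun j => tendsto_const_nhds.congr' ?_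
  filter_upwards [eventually_ge_atTop (j + c - i).toNat] with m hm
  have hmN : (m : ℤ) ≤ m * N :=
    le_mul_of_one_le_right (by positivity) (by exact_mod_cast hx.period_pos)
  rw [shiftZ_shiftZ]
  exact (hx.shiftZ_apply_of_le (by omega) (by simp)).symm

theorem tendsto_shiftZ_mul (hx : IsAnomalyDecomp x P i n N) (c : ℤ) :
    Tendsto (fun m : ℕ => shiftZ (m * N : ℤ) (shiftZ c x)) atTop (𝓝 (shiftZ (c - n) P)) := by
  refine tendsto_pi_nhds.2 fun j => tendsto_const_nhds.congr' ?_
  filter_upwards [eventually_ge_atTop (i + n + 1 - (j + c)).toNat] with m hm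
  have hmN : (m : ℤ) ≤ m * N :=
    le_mul_of_one_le_right (by positivity) (by exact_mod_cast hx.period_pos)
  rw [shiftZ_shiftZ]
  exact (hx.shiftZ_apply_of_lt (by omega) (by simp)).symm

theorem shiftZ_periodicPart_mem (hx : IsAnomalyDecomp x P i n N) (c : ℤ) :
    shiftZ c P ∈ subshiftGen x :=
  isClosed_closure.mem_of_tendsto (hx.tendsto_shiftZ_neg_mul c) (Eventually.of_forall fun _ =>
    shiftZ_mem_subshiftGen (shiftZ_mem_subshiftGen_self x c) _)

theorem periodicPart_mem (hx : IsAnomalyDecomp x P i n N) : P ∈ subshiftGen x := by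
  simpa using hx.shiftZ_periodicPart_mem 0

end IsAnomalyDecomp

end Subshift

section Model

variable {N : ℕ}

/-- In `modelSpace ν`, the point `(phase ν k, k)` stands for `σ^k x` and `(r, ∞)` for `σ^r P`
(see `paramMap`), with `ν = n mod N`. -/
def phase (ν : ZMod N) (k : ℤ) : ZMod N := k - if 0 < k then ν else 0

def modelSpace (ν : ZMod N) : Set (ZMod N × OnePoint ℤ) :=
  {p | ∀ k : ℤ, p.2 = k → p.1 = phase ν k}

theorem mk_phase_mem_modelSpace (ν : ZMod N) (k : ℤ) :
    (phase ν k, (k : OnePoint ℤ)) ∈ modelSpace ν :=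
  fun _ hk => by rw [OnePoint.coe_eq_coe.1 hk]

theorem mk_infty_mem_modelSpace (ν r : ZMod N) : (r, ∞) ∈ modelSpace ν :=
  fun k hk => absurd hk (infty_ne_coe k)

theorem isOpen_setOf_snd_eq_coe {X : Type*} [TopologicalSpace X] (k : ℤ) :
    IsOpen {p : X × OnePoint ℤ | p.2 = k} := by
  have : IsOpen ({(k : OnePoint ℤ)} : Set (OnePoint ℤ)) := by
    simpa using isOpenMap_coe _ (isOpen_discrete {k})
  exact this.preimage continuous_snd

theorem isCompact_modelSpace [NeZero N] (ν : ZMod N) : IsCompact (modelSpace ν) := by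
  rw [modelSpace, ofPred_forall]
  refine IsClosed.isCompact (isClosed_iInter fun k => ?_)
  simp only [imp_iff_not_or, ofPred_or]
  exact (isOpen_setOf_snd_eq_coe k).isClosed_compl.union
    (isClosed_eq continuous_fst continuous_const)

def modelShift (ν : ZMod N) (p : ZMod N × OnePoint ℤ) : ZMod N × OnePoint ℤ :=
  p.2.elim (p.1 + 1, ∞) fun k => (phase ν (k + 1), ((k + 1 : ℤ) : OnePoint ℤ))

theorem modelShift_mem {ν : ZMod N} {p : ZMod N × OnePoint ℤ} :
    modelShift ν p ∈ modelSpace ν := by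
  obtain ⟨r, o⟩ := p
  cases o with
  | infty => exact mk_infty_mem_modelSpace ν _
  | coe k => exact mk_phase_mem_modelSpace ν _

end Model

section Param

variable {A : Type*} {N : ℕ}

def paramMap (x P : ℤ → A) (p : ZMod N × OnePoint ℤ) : ℤ → A :=
  p.2.elim (shiftZ p.1.val P) fun k => shiftZ k x

theorem shiftMap_paramMap [NeZero N] {P : ℤ → A} (hP : Periodic P N) (x : ℤ → A)
    (ν : ZMod N) (p : ZMod N × OnePoint ℤ) :
    shiftMap (paramMap x P p) = paramMap x P (modelShift ν p) := by
  obtain ⟨r, o⟩ := p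
  change shiftZ 1 _ = _
  cases o with
  | infty =>
      refine (shiftZ_shiftZ _ _ _).trans (funext fun j => hP.apply_eq_of_intCast_eq ?_)
      simp [modelShift, add_comm]
  | coe k => exact (shiftZ_shiftZ _ _ _).trans (by rw [add_comm]; rfl)

namespace IsAnomalyDecomp

variable {x P : ℤ → A} {i : ℤ} {n : ℕ}

theorem shiftZ_apply_of_notMem_Icc (hx : IsAnomalyDecomp x P i n N) {j k : ℤ}
    (hk : k ∉ Icc (min 0 (i - j)) (max 0 (i + n - j))) :
    shiftZ k x j = shiftZ (phase (n : ZMod N) k).val P j := by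
  have := hx.neZero
  rw [mem_Icc, not_and_or, not_le, not_le, min_def, max_def] at hk
  rcases hk with hk | hk
  · refine hx.shiftZ_apply_of_le (by split_ifs at hk <;> omega) ?_
    simp [phase, show ¬ 0 < k by split_ifs at hk <;> omega]
  · refine hx.shiftZ_apply_of_lt (by split_ifs at hk <;> omega) ?_
    simp [phase, show 0 < k by split_ifs at hk <;> omega]

theorem continuous_paramMap [TopologicalSpace A] (hx : IsAnomalyDecomp x P i n N) :
    Continuous fun p : modelSpace (n : ZMod N) => paramMap x P p.1 := by
  refine continuous_pi fun j => IsLocallyConstant.continuous ?_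
  refine (IsLocallyConstant.iff_eventually_eq _).2 fun ⟨⟨r, o⟩, _⟩ => ?_
  cases o with
  | coe k =>
      filter_upwards
        [((isOpen_setOf_snd_eq_coe k).preimage continuous_subtype_val).mem_nhds rfl]
        with ⟨⟨s, o'⟩, _⟩ (hq : o' = k)
      subst hq
      rfl
  | infty =>
      set F : Set (OnePoint ℤ) := (↑) '' Icc (min 0 (i - j)) (max 0 (i + n - j))
      have hU : IsOpen {q : modelSpace (n : ZMod N) | q.1.1 = r ∧ q.1.2 ∈ Fᶜ} := by
        refine ((isOpen_discrete {r}).prod ?_).preimage continuous_subtype_val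
        exact ((finite_Icc _ _).image _).isClosed.isOpen_compl
      filter_upwards [hU.mem_nhds ⟨rfl, by simp [F]⟩]
        with ⟨⟨s, o'⟩, hq⟩ ⟨(hs : s = r), hF⟩
      subst hs
      cases o' with
      | infty => rfl
      | coe k =>
          change shiftZ k x j = shiftZ s.val P j
          rw [show s = phase (n : ZMod N) k from hq k rfl]
          exact hx.shiftZ_apply_of_notMem_Icc fun hk => hF (mem_image_of_mem _ hk)

end IsAnomalyDecomp

end Param

namespace IsAnomalyDecomp

variable {A : Type*} {x P : ℤ → A} {i : ℤ} {n N : ℕ}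

theorem injOn_paramMap (hx : IsAnomalyDecomp x P i n N) :
    InjOn (paramMap x P) (modelSpace (n : ZMod N)) := by
  have := hx.neZero
  rintro ⟨r, o⟩ hp ⟨r', o'⟩ hp' h
  cases o with
  | infty =>
      cases o' with
      | infty => simpa using (hx.shiftZ_periodicPart_inj.1 h)
      | coe k' => exact absurd h.symm (hx.shiftZ_ne_shiftZ_periodicPart _ _)
  | coe k =>
      cases o' with
      | infty => exact absurd h (hx.shiftZ_ne_shiftZ_periodicPart _ _)
      | coe k' =>
          obtain rfl : k = k' := hx.shiftZ_inj.1 h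
          exact Prod.ext ((hp k rfl).trans (hp' k rfl).symm) rfl

variable [TopologicalSpace A] [T2Space A]

theorem image_paramMap (hx : IsAnomalyDecomp x P i n N) :
    paramMap x P '' modelSpace (n : ZMod N) = subshiftGen x := by
  have := hx.neZero
  refine Subset.antisymm ?_ (closure_minimal ?_ (IsCompact.isClosed ?_))
  · rintro _ ⟨⟨r, o⟩, -, rfl⟩
    cases o with
    | infty => exact hx.shiftZ_periodicPart_mem _
    | coe k => exact shiftZ_mem_subshiftGen_self x k
  · rintro _ ⟨k, rfl⟩
    exact ⟨_, mk_phase_mem_modelSpace _ k, rfl⟩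
  · exact (isCompact_modelSpace _).image_of_continuousOn
      (continuousOn_iff_continuous_domRestrict.2 hx.continuous_paramMap)

theorem exists_eq_shiftZ_of_mem (hx : IsAnomalyDecomp x P i n N) {u : ℤ → A}
    (hu : u ∈ subshiftGen x) : (∃ k, u = shiftZ k x) ∨ ∃ r, u = shiftZ r P := by
  rw [← hx.image_paramMap] at hu
  obtain ⟨⟨r, o⟩, -, rfl⟩ := hu
  cases o with
  | infty => exact .inr ⟨r.val, rfl⟩
  | coe k => exact .inl ⟨k, rfl⟩

noncomputable def modelHomeomorph (hx : IsAnomalyDecomp x P i n N) :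
    modelSpace (n : ZMod N) ≃ₜ subshiftGen x :=
  have := hx.neZero
  have := isCompact_iff_compactSpace.1 (isCompact_modelSpace (n : ZMod N))
  Continuous.homeoOfEquivCompactToT2
    (f := (hx.image_paramMap ▸ hx.injOn_paramMap.bijOn_image).equiv _)
    (hx.continuous_paramMap.subtype_mk _)

theorem modelHomeomorph_apply (hx : IsAnomalyDecomp x P i n N) (p : modelSpace (n : ZMod N)) :
    (hx.modelHomeomorph p : ℤ → A) = paramMap x P p.1 := rfl

end IsAnomalyDecomp

section Conjugacy

variable {A B : Type*} [TopologicalSpace A] [TopologicalSpace B] {x : ℤ → A} {y : ℤ → B}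

theorem apply_eq_shiftZ_of_commute (φ : subshiftGen x ≃ₜ subshiftGen y)
    (hφ : ∀ (u : ℤ → A) (hu : u ∈ subshiftGen x) (hu' : shiftMap u ∈ subshiftGen x),
      (φ ⟨shiftMap u, hu'⟩ : ℤ → B) = shiftMap (φ ⟨u, hu⟩ : ℤ → B))
    (t : ℤ) {u v : subshiftGen x} (h : (v : ℤ → A) = shiftZ t u) :
    (φ v : ℤ → B) = shiftZ t (φ u) := by
  induction t using Int.induction_on generalizing v with
  | zero => rw [shiftZ_zero] at h ⊢; rw [Subtype.ext h]
  | succ t ih =>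
      let w : subshiftGen x := ⟨shiftZ t u, shiftZ_mem_subshiftGen u.2 t⟩
      have hv : v = ⟨shiftMap w, shiftMap_mem_subshiftGen w.2⟩ := Subtype.ext <| h.trans
        (show shiftZ ((t : ℤ) + 1) (u : ℤ → A) = shiftZ 1 (shiftZ t u) by
          rw [shiftZ_shiftZ, add_comm])
      rw [hv, hφ w.1 w.2, ih (v := w) rfl, shiftMap_eq_shiftZ_one, shiftZ_shiftZ, add_comm]
  | pred t ih =>
      have h1 := hφ v.1 v.2 (shiftMap_mem_subshiftGen v.2)
      rw [ih (v := ⟨_, shiftMap_mem_subshiftGen v.2⟩)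
        (show shiftZ 1 (v : ℤ → A) = shiftZ (-t) u by rw [h, shiftZ_shiftZ]; ring_nf)] at h1
      calc (φ v : ℤ → B) = shiftZ (-1) (shiftMap (φ v)) := by
            rw [shiftMap_eq_shiftZ_one, shiftZ_shiftZ]; simp
        _ = shiftZ (-t - 1) (φ u) := by rw [← h1, shiftZ_shiftZ]; ring_nf

theorem shiftZ_apply_eq_self_iff_of_commute (φ : subshiftGen x ≃ₜ subshiftGen y)
    (hφ : ∀ (u : ℤ → A) (hu : u ∈ subshiftGen x) (hu' : shiftMap u ∈ subshiftGen x),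
      (φ ⟨shiftMap u, hu'⟩ : ℤ → B) = shiftMap (φ ⟨u, hu⟩ : ℤ → B))
    (t : ℤ) (u : subshiftGen x) :
    shiftZ t (φ u : ℤ → B) = φ u ↔ shiftZ t (u : ℤ → A) = u := by
  rw [← apply_eq_shiftZ_of_commute φ hφ t (v := ⟨_, shiftZ_mem_subshiftGen u.2 t⟩) rfl,
    Subtype.coe_inj, φ.injective.eq_iff, Subtype.ext_iff]

end Conjugacy

namespace IsAnomalyDecomp

variable {A B : Type*} [TopologicalSpace A] [TopologicalSpace B] [T2Space B]
  {x P : ℤ → A} {i : ℤ} {n N : ℕ} {y Q : ℤ → B} {i' : ℤ} {n' M : ℕ}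

theorem conjugate [T2Space A] (hx : IsAnomalyDecomp x P i n N)
    (hy : IsAnomalyDecomp y Q i' n' N) (h : (n : ZMod N) = n') :
    Conjugate (subshiftGen x) (subshiftGen y) := by
  have := hx.neZero
  refine ⟨hx.modelHomeomorph.symm.trans
    ((Homeomorph.setCongr (congrArg modelSpace h)).trans hy.modelHomeomorph), fun u hu hu' => ?_⟩
  obtain ⟨p, hp⟩ := hx.modelHomeomorph.surjective ⟨u, hu⟩
  have hσ : (⟨shiftMap u, hu'⟩ : subshiftGen x) =
      hx.modelHomeomorph ⟨modelShift (n : ZMod N) p.1, modelShift_mem⟩ := Subtype.ext <| by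
    rw [modelHomeomorph_apply, ← shiftMap_paramMap hx.periodic, ← hx.modelHomeomorph_apply, hp]
  rw [← hp, hσ]
  simp only [Homeomorph.trans_apply, Homeomorph.symm_apply_apply, modelHomeomorph_apply]
  exact (shiftMap_paramMap hy.periodic _ _ _).symm

theorem eq_of_conjugate (hx : IsAnomalyDecomp x P i n N) (hy : IsAnomalyDecomp y Q i' n' M)
    (h : Conjugate (subshiftGen x) (subshiftGen y)) : M = N := by
  obtain ⟨φ, hφ⟩ := h
  set p : subshiftGen x := ⟨P, hx.periodicPart_mem⟩
  have hp (t : ℤ) : shiftZ t (φ p : ℤ → B) = φ p ↔ (N : ℤ) ∣ t := by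
    rw [shiftZ_apply_eq_self_iff_of_commute φ hφ, shiftZ_eq_self_iff, hx.periodic_iff]
  rcases hy.exists_eq_shiftZ_of_mem (φ p).2 with ⟨k, hk⟩ | ⟨b, hb⟩
  · have := (hp N).2 dvd_rfl
    rw [hk, shiftZ_shiftZ, hy.shiftZ_inj] at this
    have := hx.period_pos
    omega
  · have hMN (t : ℤ) : (M : ℤ) ∣ t ↔ (N : ℤ) ∣ t := by
      rw [← hp, hb, shiftZ_eq_self_iff, periodic_shiftZ_iff, hy.periodic_iff]
    exact Nat.dvd_antisymm (by exact_mod_cast (hMN N).2 dvd_rfl)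
      (by exact_mod_cast (hMN M).1 dvd_rfl)

theorem natCast_eq_of_conjugate (hx : IsAnomalyDecomp x P i n N)
    (hy : IsAnomalyDecomp y Q i' n' N) (h : Conjugate (subshiftGen x) (subshiftGen y)) :
    (n : ZMod N) = n' := by
  obtain ⟨φ, hφ⟩ := h
  have hcomm := apply_eq_shiftZ_of_commute φ hφ
  set ξ : subshiftGen x := ⟨x, by simpa using shiftZ_mem_subshiftGen_self x 0⟩
  obtain ⟨c, hc⟩ : ∃ c, (φ ξ : ℤ → B) = shiftZ c y := by
    refine (hy.exists_eq_shiftZ_of_mem (φ ξ).2).resolve_right fun ⟨b, hb⟩ => ?_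
    have := (shiftZ_apply_eq_self_iff_of_commute φ hφ N ξ).1
      (by rw [hb, shiftZ_eq_self_iff, periodic_shiftZ_iff]; exact hy.periodic)
    exact hx.period_pos.ne'
      (by exact_mod_cast hx.eq_zero_of_periodic (shiftZ_eq_self_iff.1 this))
  have hlim (s : ℕ → ℤ) (w : subshiftGen x)
      (hs : Tendsto (fun m => shiftZ (s m) x) atTop (𝓝 (w : ℤ → A))) :
      Tendsto (fun m => shiftZ (s m) (shiftZ c y)) atTop (𝓝 (φ w : ℤ → B)) := by
    have hcont : Continuous fun u : subshiftGen x => (φ u : ℤ → B) :=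
      continuous_subtype_val.comp φ.continuous
    refine ((hcont.tendsto w).comp ((tendsto_subtype_rng (f := fun m =>
      ⟨shiftZ (s m) x, shiftZ_mem_subshiftGen_self x _⟩)).2 hs)).congr fun m => ?_
    rw [← hc]
    exact hcomm (s m) rfl
  set p : subshiftGen x := ⟨P, hx.periodicPart_mem⟩
  have hp : (φ p : ℤ → B) = shiftZ c Q := tendsto_nhds_unique
    (hlim (fun m => -(m * N : ℤ)) p (by simpa using hx.tendsto_shiftZ_neg_mul 0))
    (hy.tendsto_shiftZ_neg_mul c)
  set q : subshiftGen x := ⟨shiftZ (-n) P, hx.shiftZ_periodicPart_mem _⟩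
  have hq : (φ q : ℤ → B) = shiftZ (-n + c) Q := by
    rw [hcomm (-n) (u := p) rfl, hp, shiftZ_shiftZ]
  have := tendsto_nhds_unique (hlim (fun m => (m * N : ℤ)) q
    (by simpa using hx.tendsto_shiftZ_mul 0)) (hy.tendsto_shiftZ_mul c)
  rw [hq, hy.shiftZ_periodicPart_inj] at this
  push_cast at this
  linear_combination -this

end IsAnomalyDecomp

theorem stmt_4_general {A B : Type*}
    [TopologicalSpace A] [DiscreteTopology A] [TopologicalSpace B] [DiscreteTopology B]
    (x : ℤ → A) (y : ℤ → B) (hx : EventuallyPeriodic x) (hy : EventuallyPeriodic y)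
    (N M : ℕ) (hN : evLeastPeriod x = N) (hM : evLeastPeriod y = M) :
    Conjugate (subshiftGen x) (subshiftGen y) ↔
      (M = N ∧ anomalySize x ≡ anomalySize y [MOD N]) := by
  obtain ⟨P, i, hP⟩ := hx.exists_isAnomalyDecomp
  obtain ⟨Q, i', hQ⟩ := hy.exists_isAnomalyDecomp
  rw [hN] at hP
  rw [hM] at hQ
  rw [← ZMod.natCast_eq_natCast_iff]
  refine ⟨fun h => ?_, fun ⟨hMN, h⟩ => hP.conjugate (hMN ▸ hQ) h⟩
  obtain rfl := hP.eq_of_conjugate hQ h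
  exact ⟨rfl, hP.natCast_eq_of_conjugate hQ h⟩

/-- The subshifts generated by eventually periodic sequences `x`, `y` (with
least periods `N`, `M`) are conjugate iff `M = N` and `a(x) ≡ a(y) (mod N)`. -/
theorem stmt_4 {A B : Type*} [Fintype A] [Fintype B]
    [TopologicalSpace A] [DiscreteTopology A] [TopologicalSpace B] [DiscreteTopology B]
    (x : ℤ → A) (y : ℤ → B) (hx : EventuallyPeriodic x) (hy : EventuallyPeriodic y)
    (N M : ℕ) (hN : evLeastPeriod x = N) (hM : evLeastPeriod y = M) :
    Conjugate (subshiftGen x) (subshiftGen y) ↔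
      (M = N ∧ anomalySize x ≡ anomalySize y [MOD N]) :=
  stmt_4_general x y hx hy N M hN hM
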